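/- arXiv:2110.00137 — 4 statements merged into one kernel-verified Lean document; each statement's English description precedes it below -/
import Mathlib

section
/- Let D be a finite nonempty set, s : D → ℝ a score function with a unique maximizer x⋆, and g : D → ℝ^d a bounded map with ‖g(x)‖ ≤ G for all x ∈ D. Define the softmax expectation E_β[g] = (∑_{x∈D} exp(β·s(x))·g(x)) / (∑_{x∈D} exp(β·s(x))). Then β·‖g(x⋆) − E_β[g]‖ → 0 as β → ∞. -/
open Filter Real Finset

lemma aux_tendsto_mul_exp {c : ℝ} (hc : c < 0) :
    Filter.Tendsto (fun β : ℝ => β * Real.exp (β * c)) Filter.atTop (nhds 0) := by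
  have hc' : (0:ℝ) < -c := by linarith
  have h1 : Tendsto (fun x : ℝ => x ^ 1 * Real.exp (-x)) atTop (nhds 0) :=
    Real.tendsto_pow_mul_exp_neg_atTop_nhds_zero 1
  have h2 : Tendsto (fun β : ℝ => (-c) * β) atTop atTop :=
    Tendsto.const_mul_atTop hc' tendsto_id
  have h3 := (h1.comp h2).const_mul ((-c)⁻¹)
  rw [mul_zero] at h3
  refine h3.congr (fun β => ?_)
  simp only [Function.comp_apply, pow_one]
  rw [show -(-c * β) = β * c by ring]
  rw [mul_comm (-c) β, ← mul_assoc, mul_comm ((-c)⁻¹) (β * -c), mul_assoc β,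
    mul_inv_cancel₀ (ne_of_gt hc'), mul_one]

theorem stmt1 {d : ℕ} {D : Type*} [Fintype D] [Nonempty D]
    (hcard : 2 ≤ Fintype.card D)
    (s : D → ℝ) (xstar : D) (hmax : ∀ x, x ≠ xstar → s x < s xstar)
    (g : D → EuclideanSpace ℝ (Fin d)) (G : ℝ) (hG : ∀ x, ‖g x‖ ≤ G) :
    Filter.Tendsto
      (fun β : ℝ => β * ‖g xstar -
        (∑ x, Real.exp (β * s x))⁻¹ • ∑ x, Real.exp (β * s x) • g x‖)
      Filter.atTop (nhds 0) := by
  classical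
  set T : Finset D := Finset.univ.erase xstar with hT
  -- upper bound function
  have hupper : Tendsto
      (fun β : ℝ => ∑ x ∈ T, (2 * G) * (β * Real.exp (β * (s x - s xstar))))
      atTop (nhds 0) := by
    have h0 : (0:ℝ) = ∑ _x ∈ T, (0:ℝ) := by simp
    rw [h0]
    refine tendsto_finset_sum _ (fun x hx => ?_)
    have hc : s x - s xstar < 0 :=
      sub_neg.2 (hmax x (Finset.ne_of_mem_erase hx))
    have := (aux_tendsto_mul_exp hc).const_mul (2 * G)
    simpa using this
  refine tendsto_of_tendsto_of_tendsto_of_le_of_le' tendsto_const_nhds hupper ?_ ?_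
  · filter_upwards [eventually_ge_atTop (0:ℝ)] with β hβ
    positivity
  · filter_upwards [eventually_ge_atTop (0:ℝ)] with β hβ
    set e : D → ℝ := fun x => Real.exp (β * s x) with he
    set Z : ℝ := ∑ x, e x with hZ
    have hepos : ∀ x, 0 < e x := fun x => Real.exp_pos _
    have hZpos : 0 < Z := Finset.sum_pos (fun x _ => hepos x) Finset.univ_nonempty
    have hZle : e xstar ≤ Z :=
      Finset.single_le_sum (fun x _ => (hepos x).le) (Finset.mem_univ xstar)
    -- rewrite the difference
    have h1 : (∑ x, e x • (g xstar - g x)) = Z • g xstar - ∑ x, e x • g x := by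
      rw [hZ, Finset.sum_smul, ← Finset.sum_sub_distrib]
      exact Finset.sum_congr rfl fun x _ => smul_sub _ _ _
    have hrw : Z⁻¹ • ∑ x, e x • (g xstar - g x) = g xstar - Z⁻¹ • ∑ x, e x • g x := by
      rw [h1, smul_sub, smul_smul, inv_mul_cancel₀ hZpos.ne', one_smul]
    rw [← hrw]
    have hsum_erase : ∑ x, e x • (g xstar - g x) = ∑ x ∈ T, e x • (g xstar - g x) := by
      rw [hT, ← Finset.add_sum_erase Finset.univ _ (Finset.mem_univ xstar)]
      simp
    have hnorm : ‖Z⁻¹ • ∑ x ∈ T, e x • (g xstar - g x)‖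
        ≤ Z⁻¹ * ∑ x ∈ T, e x * ‖g xstar - g x‖ := by
      rw [norm_smul, Real.norm_eq_abs, abs_of_pos (inv_pos.2 hZpos)]
      refine mul_le_mul_of_nonneg_left ?_ (inv_pos.2 hZpos).le
      refine le_trans (norm_sum_le _ _) (Finset.sum_le_sum fun x _ => ?_)
      rw [norm_smul, Real.norm_eq_abs, abs_of_pos (hepos x)]
    rw [hsum_erase]
    calc β * ‖Z⁻¹ • ∑ x ∈ T, e x • (g xstar - g x)‖
        ≤ β * (Z⁻¹ * ∑ x ∈ T, e x * ‖g xstar - g x‖) :=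
          mul_le_mul_of_nonneg_left hnorm hβ
      _ = ∑ x ∈ T, β * ((Z⁻¹ * e x) * ‖g xstar - g x‖) := by
          rw [Finset.mul_sum, Finset.mul_sum]; exact Finset.sum_congr rfl (fun x _ => by ring)
      _ ≤ ∑ x ∈ T, (2 * G) * (β * Real.exp (β * (s x - s xstar))) := by
          refine Finset.sum_le_sum fun x _ => ?_
          have hZe : Z⁻¹ * e x ≤ Real.exp (β * (s x - s xstar)) := by
            have h1 : Z⁻¹ ≤ (e xstar)⁻¹ := inv_anti₀ (hepos xstar) hZle
            have h2 : (e xstar)⁻¹ * e x = Real.exp (β * (s x - s xstar)) := by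
              rw [he]
              rw [← Real.exp_neg, ← Real.exp_add]
              congr 1; ring
            calc Z⁻¹ * e x ≤ (e xstar)⁻¹ * e x :=
                  mul_le_mul_of_nonneg_right h1 (hepos x).le
              _ = _ := h2
          have h2G : ‖g xstar - g x‖ ≤ 2 * G := by
            calc ‖g xstar - g x‖ ≤ ‖g xstar‖ + ‖g x‖ := norm_sub_le _ _
              _ ≤ 2 * G := by have := hG xstar; have := hG x; linarith
          calc β * ((Z⁻¹ * e x) * ‖g xstar - g x‖)
              ≤ β * (Real.exp (β * (s x - s xstar)) * (2 * G)) := by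
                refine mul_le_mul_of_nonneg_left ?_ hβ
                exact mul_le_mul hZe h2G (norm_nonneg _)
                  (Real.exp_pos _).le
            _ = (2 * G) * (β * Real.exp (β * (s x - s xstar))) := by ring
end

section
/- Let D be a finite set with |D| ≥ 2, s : D → ℝ with a unique maximizer x⋆ and a unique second-largest element x̂ (i.e., s(x̂) > s(x) for all x ∉ {x⋆, x̂}), and g : D → ℝ^d bounded by G. Define E_β[g] as the softmax-weighted average of g with weights exp(β·s(x)). If g(x⋆) ≠ g(x̂), then the unit vector (g(x⋆) − E_β[g]) / ‖g(x⋆) − E_β[g]‖ converges to (g(x⋆) − g(x̂)) / ‖g(x⋆) − g(x̂)‖ as β → ∞. -/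
theorem stmt2 {d : ℕ} {D : Type*} [Fintype D] [Nonempty D]
    (hcard : 2 ≤ Fintype.card D)
    (s : D → ℝ) (xstar xhat : D) (hne : xhat ≠ xstar)
    (hmax : ∀ x, x ≠ xstar → s x < s xstar)
    (hsecond : ∀ x, x ≠ xstar → x ≠ xhat → s x < s xhat)
    (g : D → EuclideanSpace ℝ (Fin d)) (G : ℝ) (hG : ∀ x, ‖g x‖ ≤ G)
    (hgne : g xstar ≠ g xhat) :
    Filter.Tendsto
      (fun β : ℝ =>
        ‖g xstar - (∑ x, Real.exp (β * s x))⁻¹ • ∑ x, Real.exp (β * s x) • g x‖⁻¹ •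
          (g xstar - (∑ x, Real.exp (β * s x))⁻¹ • ∑ x, Real.exp (β * s x) • g x))
      Filter.atTop (nhds (‖g xstar - g xhat‖⁻¹ • (g xstar - g xhat))) := by
  classical
  set L : EuclideanSpace ℝ (Fin d) := g xstar - g xhat with hL
  have hLne : L ≠ 0 := sub_ne_zero.mpr hgne
  have hsum : Filter.Tendsto
      (fun β : ℝ => ∑ x, Real.exp (β * (s x - s xhat)) • (g xstar - g x))
      Filter.atTop (nhds L) := by
    have hrw : L = ∑ x : D, (if x = xhat then L else 0) := by simp
    rw [hrw]
    apply tendsto_finset_sum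
    intro x _
    by_cases hx : x = xhat
    · subst hx; simp [hL]
    · simp only [hx, if_false]
      by_cases hxs : x = xstar
      · subst hxs; simp
      · have hc : s x - s xhat < 0 := sub_neg.mpr (hsecond x hxs hx)
        have h1 : Filter.Tendsto (fun β : ℝ => β * (s x - s xhat)) Filter.atTop Filter.atBot :=
          Filter.Tendsto.atTop_mul_const_of_neg hc Filter.tendsto_id
        have h2 : Filter.Tendsto (fun β : ℝ => Real.exp (β * (s x - s xhat)))
            Filter.atTop (nhds 0) := Real.tendsto_exp_atBot.comp h1
        have := h2.smul_const (g xstar - g x)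
        simpa using this
  have hF : ContinuousAt (fun u : EuclideanSpace ℝ (Fin d) => ‖u‖⁻¹ • u) L :=
    ContinuousAt.smul (continuousAt_id.norm.inv₀ (norm_ne_zero_iff.mpr hLne)) continuousAt_id
  have hmain := (hF.tendsto).comp hsum
  refine hmain.congr fun β => ?_
  simp only [Function.comp]
  set S : ℝ := ∑ x, Real.exp (β * s x) with hS
  have hSpos : 0 < S := Finset.sum_pos (fun x _ => Real.exp_pos _) Finset.univ_nonempty
  set v : EuclideanSpace ℝ (Fin d) := g xstar - S⁻¹ • ∑ x, Real.exp (β * s x) • g x with hv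
  have key : (∑ x, Real.exp (β * (s x - s xhat)) • (g xstar - g x))
      = (Real.exp (-(β * s xhat)) * S) • v := by
    have hterm : ∀ x : D, Real.exp (β * (s x - s xhat)) • (g xstar - g x)
        = Real.exp (-(β * s xhat)) • (Real.exp (β * s x) • (g xstar - g x)) := by
      intro x
      rw [smul_smul, ← Real.exp_add]
      ring_nf
    rw [Finset.sum_congr rfl fun x _ => hterm x, ← Finset.smul_sum]
    have hsplit : (∑ x, Real.exp (β * s x) • (g xstar - g x)) = S • v := by
      rw [hv, smul_sub, smul_smul, mul_inv_cancel₀ hSpos.ne', one_smul]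
      simp only [smul_sub]
      rw [Finset.sum_sub_distrib, ← Finset.sum_smul, ← hS]
    rw [hsplit, smul_smul]
  rw [key]
  have ht : (0:ℝ) < Real.exp (-(β * s xhat)) * S := mul_pos (Real.exp_pos _) hSpos
  rw [norm_smul, Real.norm_eq_abs, abs_of_pos ht, mul_inv, smul_smul]
  congr 1
  rw [mul_right_comm, inv_mul_cancel₀ ht.ne', one_mul]
end

section
/- Let D be a finite set, s : D → ℝ with unique maximizer x⋆, and g : D → ℝ^d bounded by G. Define E_β[g] as the softmax average with weights exp(β·s(x)). Then for all β > 0, ‖g(x⋆) − E_β[g]‖ ≤ 2G·|D|·exp(β·ξ), where ξ = max_{x ≠ x⋆}(s(x) − s(x⋆)) < 0. -/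
/-!
`g x⋆ - E_β[g]` is the normalised sum of `exp (β s x) • (g x⋆ - g x)` over `x ≠ x⋆`. Each such
weight is at most `exp (β s x⋆) · exp (β ξ)`, each difference has norm at most `2G`, and the
normaliser is at least `exp (β s x⋆)`, which cancels.
-/

open Finset

section WeightedMean

variable {ι E : Type*} [Fintype ι] [DecidableEq ι] [NormedAddCommGroup E] [NormedSpace ℝ E]

theorem sub_inv_smul_sum_smul_eq (w : ι → ℝ) (v : ι → E) (a : ι) (hZ : ∑ i, w i ≠ 0) :
    v a - (∑ i, w i)⁻¹ • ∑ i, w i • v i =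
      (∑ i, w i)⁻¹ • ∑ i ∈ univ.erase a, w i • (v a - v i) := by
  rw [sum_erase _ (by simp)]
  simp only [smul_sub, sum_sub_distrib, ← sum_smul, inv_smul_smul₀ hZ]

theorem norm_sub_weightedMean_le {w : ι → ℝ} {v : ι → E} {a : ι} {G ε : ℝ}
    (hw : ∀ i, 0 ≤ w i) (ha : 0 < w a) (hε : ∀ i ≠ a, w i ≤ w a * ε)
    (hv : ∀ i, ‖v i‖ ≤ G) :
    ‖v a - (∑ i, w i)⁻¹ • ∑ i, w i • v i‖ ≤ 2 * G * (Fintype.card ι - 1) * ε := by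
  have hZ : w a ≤ ∑ i, w i := single_le_sum (fun i _ => hw i) (mem_univ a)
  have hterm : ∀ i ∈ univ.erase a, ‖w i • (v a - v i)‖ ≤ w a * ε * (2 * G) := by
    intro i hi
    have hdiff : ‖v a - v i‖ ≤ 2 * G := by linarith [norm_sub_le (v a) (v i), hv a, hv i]
    rw [norm_smul, Real.norm_of_nonneg (hw i)]
    exact mul_le_mul (hε i (ne_of_mem_erase hi)) hdiff (norm_nonneg _)
      ((hw i).trans (hε i (ne_of_mem_erase hi)))
  have hcard : ((univ.erase a).card : ℝ) = Fintype.card ι - 1 := by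
    rw [card_erase_of_mem (mem_univ a), card_univ,
      Nat.cast_pred (Fintype.card_pos_iff.mpr ⟨a⟩)]
  have hsum : ‖∑ i ∈ univ.erase a, w i • (v a - v i)‖ ≤
      (Fintype.card ι - 1) * (w a * ε * (2 * G)) := by
    rw [← hcard, ← nsmul_eq_mul, ← sum_const]
    exact norm_sum_le_of_le _ hterm
  rw [sub_inv_smul_sum_smul_eq w v a (ha.trans_le hZ).ne', norm_smul, norm_inv,
    Real.norm_of_nonneg (ha.le.trans hZ)]
  calc (∑ i, w i)⁻¹ * ‖∑ i ∈ univ.erase a, w i • (v a - v i)‖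
      ≤ (w a)⁻¹ * ((Fintype.card ι - 1) * (w a * ε * (2 * G))) :=
        mul_le_mul (inv_anti₀ ha hZ) hsum (norm_nonneg _) (inv_nonneg.mpr ha.le)
    _ = 2 * G * (Fintype.card ι - 1) * ε := by field_simp

end WeightedMean

theorem exp_mul_le_exp_mul_mul_exp {β x y ξ : ℝ} (hβ : 0 ≤ β) (h : x - y ≤ ξ) :
    Real.exp (β * x) ≤ Real.exp (β * y) * Real.exp (β * ξ) := by
  rw [← Real.exp_add, Real.exp_le_exp]
  nlinarith

theorem stmt6_general {d : ℕ} {D : Type*} [Fintype D] [DecidableEq D]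
    (s : D → ℝ) (xstar : D) (hmax : ∀ x, x ≠ xstar → s x < s xstar)
    (g : D → EuclideanSpace ℝ (Fin d)) (G : ℝ) (hG : ∀ x, ‖g x‖ ≤ G)
    (hrest : (Finset.univ.filter (fun x : D => x ≠ xstar)).Nonempty)
    (ξ : ℝ)
    (hξdef : ξ = (Finset.univ.filter (fun x : D => x ≠ xstar)).sup' hrest
        (fun x => s x - s xstar)) :
    ξ < 0 ∧
    ∀ β : ℝ, 0 < β →
      ‖g xstar - (∑ x, Real.exp (β * s x))⁻¹ • ∑ x, Real.exp (β * s x) • g x‖ ≤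
        2 * G * (Fintype.card D) * Real.exp (β * ξ) := by
  have hgap : ∀ x ≠ xstar, s x - s xstar ≤ ξ := fun x hx =>
    hξdef ▸ le_sup' (fun x => s x - s xstar) (by simpa using hx)
  refine ⟨hξdef ▸ (sup'_lt_iff hrest).mpr fun x hx => ?_, fun β hβ => ?_⟩
  · linarith [hmax x (mem_filter.mp hx).2]
  have hG0 : 0 ≤ G := (norm_nonneg _).trans (hG xstar)
  calc _ ≤ 2 * G * (Fintype.card D - 1) * Real.exp (β * ξ) :=
        norm_sub_weightedMean_le (fun _ => (Real.exp_pos _).le) (Real.exp_pos _)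
          (fun x hx => exp_mul_le_exp_mul_mul_exp hβ.le (hgap x hx)) hG
    _ ≤ 2 * G * (Fintype.card D) * Real.exp (β * ξ) := by gcongr; linarith

theorem stmt6 {d : ℕ} {D : Type*} [Fintype D] [DecidableEq D]
    (hcard : 2 ≤ Fintype.card D)
    (s : D → ℝ) (xstar : D) (hmax : ∀ x, x ≠ xstar → s x < s xstar)
    (g : D → EuclideanSpace ℝ (Fin d)) (G : ℝ) (hG : ∀ x, ‖g x‖ ≤ G)
    (hrest : (Finset.univ.filter (fun x : D => x ≠ xstar)).Nonempty)
    (ξ : ℝ)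
    (hξdef : ξ = (Finset.univ.filter (fun x : D => x ≠ xstar)).sup' hrest
        (fun x => s x - s xstar)) :
    ξ < 0 ∧
    ∀ β : ℝ, 0 < β →
      ‖g xstar - (∑ x, Real.exp (β * s x))⁻¹ • ∑ x, Real.exp (β * s x) • g x‖ ≤
        2 * G * (Fintype.card D) * Real.exp (β * ξ) :=
  stmt6_general s xstar hmax g G hG hrest ξ hξdef
end

section
/- Let u, v, w ∈ ℝ^d with u, w nonzero, and let α = ⟨u, w⟩/(2‖u‖‖w‖). Suppose v = w + e with ‖e‖ small enough that v ≠ 0, ⟨u/‖u‖, v/‖v‖⟩ ≥ ⟨u/‖u‖, w/‖w‖⟩ − α, and that ⟨u, w⟩ > 0. Then ⟨u, v⟩ ≥ α·‖u‖·‖v‖ and, if additionally ‖v‖ ≤ α·‖u‖, then ‖u − 2v‖ ≤ ‖u‖. -/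
/-! Since `⟪u / ‖u‖, w / ‖w‖⟫ = 2α`, the angle hypothesis says exactly that the cosine of the
angle between `u` and `v` is at least `α`, i.e. `⟪u, v⟫ ≥ α ‖u‖ ‖v‖`. Expanding
`‖u - 2v‖² = ‖u‖² - 4⟪u, v⟫ + 4‖v‖² ≤ ‖u‖² - 4‖v‖ (α ‖u‖ - ‖v‖)` then gives the second claim. -/

open RealInnerProductSpace

section

variable {F : Type*} [SeminormedAddCommGroup F] [InnerProductSpace ℝ F]

theorem real_inner_inv_norm_smul_inv_norm_smul (x y : F) :
    ⟪‖x‖⁻¹ • x, ‖y‖⁻¹ • y⟫ = ⟪x, y⟫ / (‖x‖ * ‖y‖) := by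
  rw [real_inner_smul_left, real_inner_smul_right, div_eq_mul_inv, mul_inv]
  ring

theorem mul_norm_mul_norm_le_real_inner_of_le_div {x y : F} {α : ℝ}
    (h : α ≤ ⟪x, y⟫ / (‖x‖ * ‖y‖)) : α * ‖x‖ * ‖y‖ ≤ ⟪x, y⟫ := by
  rcases (mul_nonneg (norm_nonneg x) (norm_nonneg y)).eq_or_lt with hxy | hxy
  · have hinner : ⟪x, y⟫ = 0 :=
      abs_nonpos_iff.mp (hxy ▸ abs_real_inner_le_norm x y)
    rw [mul_assoc, ← hxy, mul_zero, hinner]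
  · rwa [mul_assoc, ← le_div_iff₀ hxy]

theorem norm_sub_two_smul_le_of_mul_norm_mul_norm_le_real_inner {u v : F} {α : ℝ}
    (hinner : α * ‖u‖ * ‖v‖ ≤ ⟪u, v⟫) (hv : ‖v‖ ≤ α * ‖u‖) :
    ‖u - (2 : ℝ) • v‖ ≤ ‖u‖ := by
  have hexpand : ‖u - (2 : ℝ) • v‖ ^ 2 = ‖u‖ ^ 2 - 4 * ⟪u, v⟫ + 4 * ‖v‖ ^ 2 := by
    rw [norm_sub_sq_real, real_inner_smul_right, norm_smul, Real.norm_two]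
    ring
  have hsq : ‖u - (2 : ℝ) • v‖ ^ 2 ≤ ‖u‖ ^ 2 := by
    rw [hexpand]
    nlinarith [mul_le_mul_of_nonneg_left hv (norm_nonneg v)]
  exact (sq_le_sq₀ (norm_nonneg _) (norm_nonneg _)).mp hsq

end

theorem stmt14_general {d : ℕ} (u w v : EuclideanSpace ℝ (Fin d))
    (α : ℝ) (hαdef : α = ⟪u, w⟫ / (2 * ‖u‖ * ‖w‖))
    (hangle : ⟪‖u‖⁻¹ • u, ‖v‖⁻¹ • v⟫ ≥ ⟪‖u‖⁻¹ • u, ‖w‖⁻¹ • w⟫ - α) :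
    ⟪u, v⟫ ≥ α * ‖u‖ * ‖v‖ ∧
    (‖v‖ ≤ α * ‖u‖ → ‖u - (2 : ℝ) • v‖ ≤ ‖u‖) := by
  have hcos_uw : ⟪‖u‖⁻¹ • u, ‖w‖⁻¹ • w⟫ = 2 * α := by
    rw [real_inner_inv_norm_smul_inv_norm_smul, hαdef]
    ring
  have hcos_uv : α ≤ ⟪u, v⟫ / (‖u‖ * ‖v‖) := by
    rw [← real_inner_inv_norm_smul_inv_norm_smul]
    linarith
  have hinner := mul_norm_mul_norm_le_real_inner_of_le_div hcos_uv
  exact ⟨hinner, norm_sub_two_smul_le_of_mul_norm_mul_norm_le_real_inner hinner⟩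

theorem stmt14 {d : ℕ} (u w v e : EuclideanSpace ℝ (Fin d))
    (hu : u ≠ 0) (hw : w ≠ 0) (hv : v ≠ 0)
    (α : ℝ) (hαdef : α = ⟪u, w⟫ / (2 * ‖u‖ * ‖w‖))
    (huw : 0 < ⟪u, w⟫)
    (hvdef : v = w + e)
    (hangle : ⟪‖u‖⁻¹ • u, ‖v‖⁻¹ • v⟫ ≥ ⟪‖u‖⁻¹ • u, ‖w‖⁻¹ • w⟫ - α) :
    ⟪u, v⟫ ≥ α * ‖u‖ * ‖v‖ ∧
    (‖v‖ ≤ α * ‖u‖ → ‖u - (2 : ℝ) • v‖ ≤ ‖u‖) :=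
  stmt14_general u w v α hαdef hangle
end
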